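/- Let n ≥ 4 and 0 < α < log_{n−2}((2n−4)/(n−1)). Then among all trees on n vertices, the star S_n is the unique minimizer of σ_t^α, and the path P_n attains the second smallest value of σ_t^α. -/

import Mathlib

open Finset

/-- The degree of a vertex: the number of its neighbors. -/
noncomputable def deg {n : ℕ} (G : SimpleGraph (Fin n)) (v : Fin n) : ℕ :=
  Nat.card {u | G.Adj v u}

/-- `σ_t^α(G) = Σ_{{u,v}⊆V(G)} |d(u)−d(v)|^α`, summed over unordered pairs of
distinct vertices. -/
noncomputable def sigmaT {n : ℕ} (G : SimpleGraph (Fin n)) (α : ℝ) : ℝ :=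
  ∑ i : Fin n, ∑ j ∈ Finset.Ioi i, |((deg G i : ℝ)) - (deg G j : ℝ)| ^ α

/-- The star on `n` vertices: vertex `0` is adjacent to all other vertices. -/
def starGraph (n : ℕ) : SimpleGraph (Fin n) where
  Adj i j := i ≠ j ∧ ((i : ℕ) = 0 ∨ (j : ℕ) = 0)
  symm := by
    constructor
    intro i j ⟨h1, h2⟩
    exact ⟨h1.symm, h2.symm⟩
  loopless := by
    constructor
    intro i ⟨h, _⟩
    exact h rfl

/-!
Each pair formed by a leaf and a non-leaf contributes at least `1` to `σ_t^α(T)`, so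
`σ_t^α(T) ≥ L · N`, where `L + N = n` count leaves and non-leaves. Every tree has `L ≥ 2`,
and a tree with `N ≤ 1` is a star, so for `T ≇ S_n` we get
`σ_t^α(T) ≥ L · N ≥ 2n - 4 = σ_t^α(P_n)`, as `(L - 2)(N - 2) ≥ 0`.
The bound on `α` is exactly `σ_t^α(S_n) = (n - 1)(n - 2)^α < 2n - 4`.
-/

lemma Finset.sum_sum_Ioi_add_eq_sum_sum {ι M : Type*} [AddCommMonoid M] [LinearOrder ι]
    [Fintype ι] [LocallyFiniteOrderTop ι] [LocallyFiniteOrderBot ι] (f : ι → ι → M)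
    (hf : ∀ i, f i i = 0) :
    ∑ i, ∑ j ∈ Ioi i, (f j i + f i j) = ∑ i, ∑ j, f i j := by
  rw [sum_sum_Ioi_add_eq_sum_sum_off_diag, sum_comm (s := univ) (t := univ) (f := f)]
  refine sum_congr rfl fun i _ => ?_
  rw [Fintype.sum_eq_add_sum_compl i, hf, zero_add]

lemma one_le_abs_natCast_sub {a b : ℕ} (h : a ≠ b) : (1 : ℝ) ≤ |(a : ℝ) - b| := by
  have h' : (a : ℤ) - b ≠ 0 := sub_ne_zero.mpr (by exact_mod_cast h)
  exact_mod_cast Int.one_le_abs h'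

lemma deg_eq_degree {n : ℕ} (G : SimpleGraph (Fin n)) [DecidableRel G.Adj] (v : Fin n) :
    deg G v = G.degree v := by
  rw [deg, ← SimpleGraph.card_neighborSet_eq_degree, ← Nat.card_eq_fintype_card]
  rfl

section sigmaT

variable {n : ℕ} {α : ℝ}

lemma sigmaT_eq_of_deg_eq_ite (G : SimpleGraph (Fin n)) (hα : 0 < α) (s : Finset (Fin n))
    (a b : ℕ) (hdeg : ∀ v, deg G v = if v ∈ s then a else b) :
    sigmaT G α = #s * #sᶜ * |(a : ℝ) - b| ^ α := by
  set g : Fin n → Fin n → ℝ := fun i j =>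
    if i ∈ s ∧ j ∉ s then |(a : ℝ) - b| ^ α else 0
  have hg : ∀ i j, |(deg G i : ℝ) - deg G j| ^ α = g j i + g i j := by
    intro i j
    simp only [g, hdeg]
    split_ifs <;> simp_all [abs_sub_comm, Real.zero_rpow hα.ne']
  calc sigmaT G α = ∑ i, ∑ j ∈ Ioi i, (g j i + g i j) := by simp only [sigmaT, hg]
    _ = ∑ i, ∑ j, g i j := sum_sum_Ioi_add_eq_sum_sum g (by simp [g])
    _ = #s * #sᶜ * |(a : ℝ) - b| ^ α := by
      simp [g, ite_and, sum_ite, filter_not, compl_eq_univ_sdiff, mul_assoc]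

lemma card_mul_card_le_sigmaT (G : SimpleGraph (Fin n)) (hα : 0 ≤ α) {s t : Finset (Fin n)}
    (hst : ∀ i ∈ s, ∀ j ∈ t, deg G i ≠ deg G j) : (#s * #t : ℝ) ≤ sigmaT G α := by
  set g : Fin n → Fin n → ℝ := fun i j => if i ∈ s ∧ j ∈ t then 1 else 0
  have hg : ∀ i j, g j i + g i j ≤ |(deg G i : ℝ) - deg G j| ^ α := by
    intro i j
    simp only [g]
    split_ifs with h₁ h₂ h₂
    · exact absurd rfl (hst i h₂.1 i h₁.2)
    · rw [abs_sub_comm]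
      simpa using Real.one_le_rpow (one_le_abs_natCast_sub (hst j h₁.1 i h₁.2)) hα
    · simpa using Real.one_le_rpow (one_le_abs_natCast_sub (hst i h₂.1 j h₂.2)) hα
    · simpa using Real.rpow_nonneg (abs_nonneg _) α
  calc (#s * #t : ℝ) = ∑ i, ∑ j, g i j := by simp [g, ite_and, sum_ite_mem]
    _ = ∑ i, ∑ j ∈ Ioi i, (g j i + g i j) :=
      (sum_sum_Ioi_add_eq_sum_sum g fun i => if_neg fun h => hst i h.1 i h.2 rfl).symm
    _ ≤ sigmaT G α := sum_le_sum fun i _ => sum_le_sum fun j _ => hg i j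

lemma starGraph_eq (hn : 0 < n) : starGraph n = SimpleGraph.starGraph (⟨0, hn⟩ : Fin n) := by
  ext i j
  simp [starGraph, Fin.ext_iff]

lemma deg_starGraph (hn : 0 < n) (v : Fin n) :
    deg (starGraph n) v = if v ∈ ({⟨0, hn⟩} : Finset (Fin n)) then n - 1 else 1 := by
  rw [starGraph_eq hn, deg_eq_degree]
  split_ifs with hv
  · rw [mem_singleton.mp hv, SimpleGraph.degree_starGraph_center, Fintype.card_fin]
  · exact SimpleGraph.degree_starGraph_of_ne_center (by simpa using hv)

lemma sigmaT_starGraph (hn : 2 ≤ n) (hα : 0 < α) :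
    sigmaT (starGraph n) α = ((n : ℝ) - 1) * ((n : ℝ) - 2) ^ α := by
  rw [sigmaT_eq_of_deg_eq_ite _ hα _ _ _ (deg_starGraph (by omega)), card_compl,
    card_singleton, Fintype.card_fin, Nat.cast_sub (by omega),
    Nat.cast_one, one_mul, sub_sub, one_add_one_eq_two,
    abs_of_nonneg (by linarith [show (2 : ℝ) ≤ n by exact_mod_cast hn])]

lemma deg_pathGraph (hn : 2 ≤ n) (v : Fin n) :
    deg (SimpleGraph.pathGraph n) v =
      if v ∈ ({⟨0, by omega⟩, ⟨n - 1, by omega⟩} : Finset (Fin n)) then 1 else 2 := by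
  classical
  rw [deg_eq_degree, ← SimpleGraph.card_neighborFinset_eq_degree]
  have := v.isLt
  simp only [mem_insert, mem_singleton, Fin.ext_iff]
  split_ifs with hv
  · rcases hv with hv | hv
    · rw [card_eq_one]
      refine ⟨⟨1, by omega⟩, ?_⟩
      ext u
      simp [SimpleGraph.pathGraph_adj, Fin.ext_iff]
      omega
    · rw [card_eq_one]
      refine ⟨⟨n - 2, by omega⟩, ?_⟩
      ext u
      simp [SimpleGraph.pathGraph_adj, Fin.ext_iff]
      omega
  · rw [card_eq_two]
    refine ⟨⟨v - 1, by omega⟩, ⟨v + 1, by omega⟩, by simp [Fin.ext_iff], ?_⟩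
    ext u
    simp [SimpleGraph.pathGraph_adj, Fin.ext_iff]
    omega

lemma sigmaT_pathGraph (hn : 2 ≤ n) (hα : 0 < α) :
    sigmaT (SimpleGraph.pathGraph n) α = 2 * (n : ℝ) - 4 := by
  rw [sigmaT_eq_of_deg_eq_ite _ hα _ _ _ (deg_pathGraph hn), card_compl,
    card_pair (by simp [Fin.ext_iff]; omega), Fintype.card_fin, Nat.cast_sub (by omega)]
  norm_num
  ring

end sigmaT

namespace SimpleGraph

variable {V : Type*} [Fintype V]

def starGraphSwapIso [DecidableEq V] (c d : V) : starGraph c ≃g starGraph d where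
  toEquiv := Equiv.swap c d
  map_rel_iff' {u v} := by
    simp only [starGraph_adj, ne_eq, EmbeddingLike.apply_eq_iff_eq, Equiv.swap_apply_eq_iff,
      Equiv.swap_apply_right]

variable {T : SimpleGraph V} [DecidableRel T.Adj]

lemma IsTree.sum_degrees_eq (hT : T.IsTree) : ∑ v, T.degree v = 2 * (Fintype.card V - 1) := by
  rw [sum_degrees_eq_twice_card_edges, ← hT.card_edgeFinset, Nat.add_sub_cancel]

lemma IsTree.isUniversal_of_forall_ne_degree_eq_one (hT : T.IsTree) {c : V}
    (h : ∀ v ≠ c, T.degree v = 1) : T.IsUniversal c := by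
  classical
  have hc : T.degree c = Fintype.card V - 1 := by
    have hsum := hT.sum_degrees_eq
    rw [← add_sum_erase _ _ (mem_univ c), sum_congr rfl fun v hv => h v (ne_of_mem_erase hv),
      sum_const, card_erase_of_mem (mem_univ c), card_univ, smul_eq_mul, mul_one] at hsum
    omega
  have hnbr : T.neighborFinset c = univ.erase c := by
    refine eq_of_subset_of_card_le (fun v hv => mem_erase.mpr ⟨?_, mem_univ v⟩) ?_
    · exact (T.ne_of_adj ((T.mem_neighborFinset c v).mp hv)).symm
    · rw [card_neighborFinset_eq_degree, hc, card_erase_of_mem (mem_univ c), card_univ]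
  intro v hv
  exact (T.mem_neighborFinset c v).mp (hnbr ▸ mem_erase.mpr ⟨hv.symm, mem_univ v⟩)

lemma IsTree.eq_starGraph_of_forall_ne_degree_eq_one (hT : T.IsTree) {c : V}
    (h : ∀ v ≠ c, T.degree v = 1) : T = starGraph c := by
  have hc := hT.isUniversal_of_forall_ne_degree_eq_one h
  have hleaf : ∀ u ≠ c, ∀ v, T.Adj u v → v = c := fun u hu v huv =>
    (degree_eq_one_iff_existsUnique_adj.mp (h u hu)).unique huv (hc hu.symm).symm
  ext u v
  rw [starGraph_adj]
  refine ⟨fun huv => ⟨T.ne_of_adj huv, ?_⟩, ?_⟩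
  · by_contra! hne
    exact hne.2 (hleaf u hne.1 v huv)
  · rintro ⟨huv, rfl | rfl⟩
    · exact hc huv
    · exact (hc huv.symm).symm

lemma IsTree.exists_eq_starGraph_of_card_le_one (hT : T.IsTree)
    (h : #{v | T.degree v ≠ 1} ≤ 1) : ∃ c, T = starGraph c := by
  by_cases hall : ∀ v, T.degree v = 1
  · obtain ⟨c⟩ := hT.connected.nonempty
    exact ⟨c, hT.eq_starGraph_of_forall_ne_degree_eq_one fun v _ => hall v⟩
  · obtain ⟨c, hc⟩ := not_forall.mp hall
    refine ⟨c, hT.eq_starGraph_of_forall_ne_degree_eq_one fun v hv => ?_⟩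
    by_contra hv'
    exact hv (card_le_one.mp h v (by simpa using hv') c (by simpa using hc))

end SimpleGraph

section Tree

variable {n : ℕ} {T : SimpleGraph (Fin n)}

lemma nonempty_iso_starGraph (c : Fin n) :
    Nonempty (SimpleGraph.starGraph c ≃g starGraph n) := by
  rw [starGraph_eq c.pos]
  exact ⟨SimpleGraph.starGraphSwapIso c _⟩

lemma two_le_card_degree_ne_one_of_isTree [DecidableRel T.Adj] (hT : T.IsTree)
    (hns : ¬ Nonempty (T ≃g starGraph n)) : 2 ≤ #{v | T.degree v ≠ 1} := by
  by_contra! h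
  obtain ⟨c, rfl⟩ := hT.exists_eq_starGraph_of_card_le_one (by omega)
  exact hns (nonempty_iso_starGraph c)

lemma two_mul_sub_four_le_sigmaT_of_isTree {α : ℝ} (hα : 0 ≤ α) (hT : T.IsTree)
    (hns : ¬ Nonempty (T ≃g starGraph n)) : 2 * (n : ℝ) - 4 ≤ sigmaT T α := by
  classical
  set leaves := ({v | T.degree v = 1} : Finset (Fin n))
  set internal := ({v | T.degree v ≠ 1} : Finset (Fin n))
  have hinternal : 2 ≤ #internal := two_le_card_degree_ne_one_of_isTree hT hns
  have hleaves : 2 ≤ #leaves := by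
    have : Nontrivial (Fin n) := Fin.nontrivial_iff_two_le.mpr
      (hinternal.trans ((card_filter_le _ _).trans_eq (card_fin n)))
    obtain ⟨u, v, huv, hu, hv⟩ := hT.exists_ne_and_degree_eq_one
    calc 2 = #{u, v} := (card_pair huv).symm
      _ ≤ #leaves := card_le_card (by simp [leaves, insert_subset_iff, hu, hv])
  have hcard : #leaves + #internal = n := by
    simpa using card_filter_add_card_filter_not (s := univ) (fun v => T.degree v = 1)
  have hσ : (#leaves * #internal : ℝ) ≤ sigmaT T α :=
    card_mul_card_le_sigmaT T hα fun i hi j hj => by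
      simp only [leaves, internal, mem_filter, mem_univ, true_and, deg_eq_degree] at hi hj ⊢
      omega
  have hL : (2 : ℝ) ≤ #leaves := by exact_mod_cast hleaves
  have hI : (2 : ℝ) ≤ #internal := by exact_mod_cast hinternal
  have hn : (#leaves : ℝ) + #internal = n := by exact_mod_cast hcard
  nlinarith [mul_nonneg (sub_nonneg.2 hL) (sub_nonneg.2 hI)]

end Tree

/-- Let `n ≥ 4` and `0 < α < log_{n−2}((2n−4)/(n−1))`. Among all trees on `n`
vertices, the star `S_n` is the unique (up to isomorphism) minimizer of
`σ_t^α`, and the path `P_n` attains the second smallest value of `σ_t^α`. -/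
theorem stmt_14 (n : ℕ) (hn : 4 ≤ n) (α : ℝ) (hα0 : 0 < α)
    (hα : α < Real.logb ((n : ℝ) - 2) ((2 * (n : ℝ) - 4) / ((n : ℝ) - 1))) :
    (∀ T : SimpleGraph (Fin n), T.IsTree →
        ¬ Nonempty (T ≃g starGraph n) → sigmaT (starGraph n) α < sigmaT T α) ∧
    (∀ T : SimpleGraph (Fin n), T.IsTree →
        ¬ Nonempty (T ≃g starGraph n) →
          sigmaT (SimpleGraph.pathGraph n) α ≤ sigmaT T α) := by
  have hn' : (4 : ℝ) ≤ n := by exact_mod_cast hn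
  have hpow : ((n : ℝ) - 2) ^ α < (2 * n - 4) / (n - 1) := by
    have h := Real.rpow_lt_rpow_of_exponent_lt (by linarith : (1 : ℝ) < n - 2) hα
    rwa [Real.rpow_logb (by linarith) (by linarith) (div_pos (by linarith) (by linarith))] at h
  have hpath : sigmaT (SimpleGraph.pathGraph n) α = 2 * n - 4 := sigmaT_pathGraph (by omega) hα0
  have hstar : sigmaT (starGraph n) α < sigmaT (SimpleGraph.pathGraph n) α := by
    rw [sigmaT_starGraph (by omega) hα0, hpath, ← lt_div_iff₀' (by linarith)]
    exact hpow
  have hlower : ∀ T : SimpleGraph (Fin n), T.IsTree → ¬ Nonempty (T ≃g starGraph n) →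
      sigmaT (SimpleGraph.pathGraph n) α ≤ sigmaT T α := fun T hT hns =>
    hpath ▸ two_mul_sub_four_le_sigmaT_of_isTree hα0.le hT hns
  exact ⟨fun T hT hns => hstar.trans_le (hlower T hT hns), hlower⟩
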